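/- Discrete L∞-H¹ estimate on the volume fractions: if (c, μ) is a solution of the one-step scheme such that 0 < c_{i,K} < 1 for every K ∈ V and i ∈ {1,2}, then Σ_{{K,L} ∈ E} τ_{KL} (c_{1,K} − c_{1,L})² ≤ (2/α) ( E(c⁰) + Σ_{i=1,2} Σ_{K ∈ V} m_K |Ψ_{i,K}| ). -/

import Mathlib

open Finset

/-- Logarithmic-mean edge value: `lm a b = a` if `a = b ≥ 0`, `0` if `min a b ≤ 0`,
and `(a - b)/(log a - log b)` otherwise. -/
noncomputable def lm (a b : ℝ) : ℝ :=
  if a = b ∧ 0 ≤ a then a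
  else if min a b ≤ 0 then 0
  else (a - b) / (Real.log a - Real.log b)

/-- Entropy function `H(c) = c log c - c + 1` (note `H 0 = 1` since `Real.log 0 = 0`). -/
noncomputable def ent (c : ℝ) : ℝ := c * Real.log c - c + 1

/-- Sum of `f L` over the neighbours `L` of `K`, i.e. over the `L` with `(K, L) ∈ E`. -/
noncomputable def nbrSum {V : Type*} [Fintype V] [DecidableEq V]
    (E : Finset (V × V)) (K : V) (f : V → ℝ) : ℝ :=
  ∑ L ∈ Finset.univ.filter (fun L => (K, L) ∈ E), f L

/-- Sum of a symmetric quantity `f K L` over the unordered edges `{K, L}`, where the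
edge set `E` is recorded as a symmetric finset of ordered pairs: each unordered edge
appears as both `(K, L)` and `(L, K)`, whence the division by `2`. -/
noncomputable def edgeSum {V : Type*} (E : Finset (V × V)) (f : V → V → ℝ) : ℝ :=
  (∑ p ∈ E, f p.1 p.2) / 2

/-- The one-step finite-volume scheme: equations (i) for both phases, (ii), (iii), (iv). -/
def OneStepScheme {V : Type*} [Fintype V] [DecidableEq V]
    (E : Finset (V × V)) (m : V → ℝ) (τ : V → V → ℝ)
    (Δt α κ η₁ η₂ θ₁ θ₂ : ℝ) (Ψ₁ Ψ₂ : V → ℝ)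
    (c₁₀ c₂₀ c₁ c₂ μ₁ μ₂ : V → ℝ) : Prop :=
  (∀ K : V,
    m K * (c₁ K - c₁₀ K) / Δt
      + nbrSum E K (fun L =>
          τ K L * (lm (c₁ K) (c₁ L) / η₁ * (μ₁ K + Ψ₁ K - μ₁ L - Ψ₁ L)
            + θ₁ * (c₁ K - c₁ L))) = 0) ∧
  (∀ K : V,
    m K * (c₂ K - c₂₀ K) / Δt
      + nbrSum E K (fun L =>
          τ K L * (lm (c₂ K) (c₂ L) / η₂ * (μ₂ K + Ψ₂ K - μ₂ L - Ψ₂ L)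
            + θ₂ * (c₂ K - c₂ L))) = 0) ∧
  (∀ K : V,
    μ₁ K - μ₂ K
      = α / m K * nbrSum E K (fun L => τ K L * (c₁ K - c₁ L))
        + κ * (1 - 2 * c₁₀ K)) ∧
  (∀ K : V, c₁ K + c₂ K = 1) ∧
  (∑ K : V, m K * (c₁ K * μ₁ K + c₂ K * μ₂ K) = 0)

/-- The discrete energy `𝔈(c)`. -/
noncomputable def discreteEnergy {V : Type*} [Fintype V]
    (E : Finset (V × V)) (m : V → ℝ) (τ : V → V → ℝ)
    (α κ η₁ η₂ θ₁ θ₂ : ℝ) (Ψ₁ Ψ₂ : V → ℝ) (c₁ c₂ : V → ℝ) : ℝ :=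
  α / 2 * edgeSum E (fun K L => τ K L * (c₁ K - c₁ L) ^ 2)
    + ∑ K : V, m K * (κ * c₁ K * c₂ K
        + (c₁ K * Ψ₁ K + θ₁ * η₁ * ent (c₁ K))
        + (c₂ K * Ψ₂ K + θ₂ * η₂ * ent (c₂ K)))

/-- The discrete dissipation `𝔇(c, μ)`. -/
noncomputable def discreteDissipation {V : Type*}
    (E : Finset (V × V)) (τ : V → V → ℝ)
    (η₁ η₂ θ₁ θ₂ : ℝ) (Ψ₁ Ψ₂ : V → ℝ) (c₁ c₂ μ₁ μ₂ : V → ℝ) : ℝ :=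
  edgeSum E (fun K L => τ K L * (lm (c₁ K) (c₁ L) / η₁)
      * (μ₁ K + Ψ₁ K + θ₁ * η₁ * Real.log (c₁ K)
          - μ₁ L - Ψ₁ L - θ₁ * η₁ * Real.log (c₁ L)) ^ 2)
  + edgeSum E (fun K L => τ K L * (lm (c₂ K) (c₂ L) / η₂)
      * (μ₂ K + Ψ₂ K + θ₂ * η₂ * Real.log (c₂ K)
          - μ₂ L - Ψ₂ L - θ₂ * η₂ * Real.log (c₂ L)) ^ 2)

/-!
Testing the `i`-th transport equation against the potential `wᵢ = μᵢ + Ψᵢ + θᵢ ηᵢ log cᵢ` and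
summing by parts gives `Σ mₖ (cᵢ - cᵢ⁰) wᵢ = -Δt 𝔇ᵢ`: the identity
`θᵢ (c_K - c_L) = lm(c_K, c_L) θᵢ (log c_K - log c_L)` absorbs the diffusive flux into the
gradient of `wᵢ`. The increment of the convex part of the energy (Dirichlet form, entropies,
potentials) is bounded by its derivative at `c`, that of the concave part `κ c₁ c₂` by its
derivative at `c⁰`, which is what the explicit term `κ (1 - 2 c₁⁰)` of the scheme encodes; by
(ii) and (iii) these bounds add up to the tests above, so `𝔈(c) + Δt 𝔇 ≤ 𝔈(c⁰)`. Finally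
`𝔈(c) ≥ α/2 |c₁|²_{H¹} - Σ mₖ (|Ψ₁ₖ| + |Ψ₂ₖ|)`, as `κ c₁ c₂` and the entropies are nonnegative
and `0 ≤ cᵢ ≤ 1`.
-/

open Real

theorem lm_symm (a b : ℝ) : lm a b = lm b a := by
  unfold lm
  rcases eq_or_ne a b with rfl | hab
  · rfl
  · simp only [hab, hab.symm, false_and, if_false, min_comm b a]
    split_ifs
    · rfl
    · rw [← neg_sub a b, ← neg_sub (log a) (log b), neg_div_neg_eq]

theorem lm_nonneg (a b : ℝ) : 0 ≤ lm a b := by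
  unfold lm
  split_ifs with hab hmin
  · exact hab.2
  · exact le_rfl
  · obtain ⟨ha, hb⟩ := lt_min_iff.mp (not_le.mp hmin)
    rcases lt_or_gt_of_ne (fun h : a = b => hab ⟨h, ha.le⟩) with h | h
    · exact div_nonneg_of_nonpos (sub_nonpos.2 h.le) (sub_nonpos.2 (log_lt_log ha h).le)
    · exact div_nonneg (sub_nonneg.2 h.le) (sub_nonneg.2 (log_lt_log hb h).le)

theorem lm_mul_log_sub_log {a b : ℝ} (ha : 0 < a) (hb : 0 < b) :
    lm a b * (log a - log b) = a - b := by
  unfold lm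
  split_ifs with hab hmin
  · rw [hab.1, sub_self, sub_self, mul_zero]
  · exact absurd (lt_min ha hb) (not_lt.2 hmin)
  · have hlog : log a ≠ log b := fun h => hab ⟨log_injOn_pos ha hb h, ha.le⟩
    exact div_mul_cancel₀ _ (sub_ne_zero.2 hlog)

theorem ent_nonneg {c : ℝ} (hc : 0 ≤ c) : 0 ≤ ent c := by
  unfold ent
  linarith [self_sub_one_le_mul_log hc]

theorem ent_sub_ent_le {c c₀ : ℝ} (hc : 0 < c) (hc₀ : 0 ≤ c₀) :
    ent c - ent c₀ ≤ log c * (c - c₀) := by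
  unfold ent
  rcases hc₀.eq_or_lt with rfl | hc₀
  · nlinarith [log_zero]
  · have h := log_le_sub_one_of_pos (div_pos hc hc₀)
    have h' : c₀ * (log c - log c₀) ≤ c - c₀ := by
      have := mul_le_mul_of_nonneg_left h hc₀.le
      rwa [log_div hc.ne' hc₀.ne', mul_sub_one, mul_div_cancel₀ _ hc₀.ne'] at this
    nlinarith

theorem mul_sub_mul_le_of_add_eq_one {a b a₀ b₀ : ℝ} (h : a + b = 1) (h₀ : a₀ + b₀ = 1) :
    a * b - a₀ * b₀ ≤ (a - a₀) * (1 - 2 * a₀) := by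
  obtain rfl : b = 1 - a := by linarith
  obtain rfl : b₀ = 1 - a₀ := by linarith
  nlinarith [sq_nonneg (a - a₀)]

section Graph

variable {V : Type*} {E : Finset (V × V)}

theorem sum_swap_of_symm (hE : ∀ K L, (K, L) ∈ E ↔ (L, K) ∈ E) (f : V → V → ℝ) :
    ∑ p ∈ E, f p.1 p.2 = ∑ p ∈ E, f p.2 p.1 :=
  sum_equiv (Equiv.prodComm V V) (fun p => hE p.1 p.2) (fun _ _ => rfl)

theorem edgeSum_nonneg {f : V → V → ℝ} (hf : ∀ K L, (K, L) ∈ E → 0 ≤ f K L) :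
    0 ≤ edgeSum E f :=
  div_nonneg (sum_nonneg fun p hp => hf p.1 p.2 hp) zero_le_two

theorem discreteDissipation_nonneg {τ : V → V → ℝ} {η₁ η₂ : ℝ}
    (hτ : ∀ K L, (K, L) ∈ E → 0 ≤ τ K L) (hη₁ : 0 ≤ η₁) (hη₂ : 0 ≤ η₂)
    (θ₁ θ₂ : ℝ) (Ψ₁ Ψ₂ c₁ c₂ μ₁ μ₂ : V → ℝ) :
    0 ≤ discreteDissipation E τ η₁ η₂ θ₁ θ₂ Ψ₁ Ψ₂ c₁ c₂ μ₁ μ₂ :=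
  add_nonneg
    (edgeSum_nonneg fun K L h =>
      mul_nonneg (mul_nonneg (hτ K L h) (div_nonneg (lm_nonneg _ _) hη₁)) (sq_nonneg _))
    (edgeSum_nonneg fun K L h =>
      mul_nonneg (mul_nonneg (hτ K L h) (div_nonneg (lm_nonneg _ _) hη₂)) (sq_nonneg _))

theorem half_mul_edgeSum_le_discreteEnergy_add [Fintype V] {m : V → ℝ} {κ η₁ η₂ θ₁ θ₂ : ℝ}
    {c₁ c₂ : V → ℝ} (hm : ∀ K, 0 ≤ m K) (hκ : 0 ≤ κ) (hη₁ : 0 ≤ η₁) (hη₂ : 0 ≤ η₂)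
    (hθ₁ : 0 ≤ θ₁) (hθ₂ : 0 ≤ θ₂) (hc₁ : ∀ K, c₁ K ∈ Set.Icc (0 : ℝ) 1)
    (hc₂ : ∀ K, c₂ K ∈ Set.Icc (0 : ℝ) 1) (τ : V → V → ℝ) (α : ℝ) (Ψ₁ Ψ₂ : V → ℝ) :
    α / 2 * edgeSum E (fun K L => τ K L * (c₁ K - c₁ L) ^ 2)
      ≤ discreteEnergy E m τ α κ η₁ η₂ θ₁ θ₂ Ψ₁ Ψ₂ c₁ c₂
        + ((∑ K, m K * |Ψ₁ K|) + ∑ K, m K * |Ψ₂ K|) := by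
  have hΨ : ∀ c Ψ : ℝ, c ∈ Set.Icc (0 : ℝ) 1 → 0 ≤ c * Ψ + |Ψ| := fun c Ψ ⟨h0, h1⟩ => by
    nlinarith [abs_nonneg Ψ, neg_abs_le Ψ]
  have hcell : ∀ K, 0 ≤ m K * (κ * c₁ K * c₂ K + (c₁ K * Ψ₁ K + θ₁ * η₁ * ent (c₁ K))
      + (c₂ K * Ψ₂ K + θ₂ * η₂ * ent (c₂ K))) + m K * |Ψ₁ K| + m K * |Ψ₂ K| := fun K => by
    have hκK := mul_nonneg (mul_nonneg hκ (hc₁ K).1) (hc₂ K).1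
    have hent₁ := mul_nonneg (mul_nonneg hθ₁ hη₁) (ent_nonneg (hc₁ K).1)
    have hent₂ := mul_nonneg (mul_nonneg hθ₂ hη₂) (ent_nonneg (hc₂ K).1)
    have hΨ₁ := hΨ _ (Ψ₁ K) (hc₁ K)
    have hΨ₂ := hΨ _ (Ψ₂ K) (hc₂ K)
    rw [← mul_add, ← mul_add]
    exact mul_nonneg (hm K) (by linarith)
  have hcells := sum_nonneg fun K (_ : K ∈ univ) => hcell K
  rw [sum_add_distrib, sum_add_distrib] at hcells
  unfold discreteEnergy
  linarith

variable [Fintype V] [DecidableEq V]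

theorem sum_nbrSum (E : Finset (V × V)) (g : V → V → ℝ) :
    ∑ K, nbrSum E K (g K) = ∑ p ∈ E, g p.1 p.2 := by
  simp only [nbrSum, sum_filter]
  rw [← Fintype.sum_prod_type', sum_ite_mem, univ_inter]

theorem sum_mul_nbrSum_eq_edgeSum (hE : ∀ K L, (K, L) ∈ E ↔ (L, K) ∈ E) {a : V → V → ℝ}
    (ha : ∀ K L, a K L = a L K) (u w : V → ℝ) :
    ∑ K, u K * nbrSum E K (fun L => a K L * (w K - w L))
      = edgeSum E (fun K L => a K L * (u K - u L) * (w K - w L)) := by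
  have hS : ∑ K, u K * nbrSum E K (fun L => a K L * (w K - w L))
      = ∑ p ∈ E, u p.1 * (a p.1 p.2 * (w p.1 - w p.2)) := by
    simp only [nbrSum, mul_sum]
    exact sum_nbrSum E fun K L => u K * (a K L * (w K - w L))
  have hT := sum_swap_of_symm hE fun K L => u K * (a K L * (w K - w L))
  rw [hS, edgeSum, eq_div_iff two_ne_zero, mul_two]
  nth_rewrite 2 [hT]
  rw [← sum_add_distrib]
  refine sum_congr rfl fun p _ => ?_
  rw [ha p.2 p.1]
  ring

theorem edgeSum_sq_sub_edgeSum_sq_le {τ : V → V → ℝ} (hE : ∀ K L, (K, L) ∈ E ↔ (L, K) ∈ E)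
    (hτ : ∀ K L, (K, L) ∈ E → 0 ≤ τ K L) (hτsym : ∀ K L, τ K L = τ L K) (u v : V → ℝ) :
    edgeSum E (fun K L => τ K L * (u K - u L) ^ 2) - edgeSum E (fun K L => τ K L * (v K - v L) ^ 2)
      ≤ 2 * ∑ K, (u K - v K) * nbrSum E K (fun L => τ K L * (u K - u L)) := by
  have hpoint : ∑ p ∈ E, τ p.1 p.2 * (u p.1 - u p.2) ^ 2 - ∑ p ∈ E, τ p.1 p.2 * (v p.1 - v p.2) ^ 2
      ≤ 2 * ∑ p ∈ E, τ p.1 p.2 * (u p.1 - v p.1 - (u p.2 - v p.2)) * (u p.1 - u p.2) := by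
    rw [← sum_sub_distrib, mul_sum]
    refine sum_le_sum fun p hp => ?_
    nlinarith [mul_nonneg (hτ p.1 p.2 hp) (sq_nonneg (u p.1 - u p.2 - (v p.1 - v p.2)))]
  rw [sum_mul_nbrSum_eq_edgeSum hE hτsym]
  simp only [edgeSum]
  linarith

theorem sum_increment_mul_potential_eq {m : V → ℝ} {τ : V → V → ℝ} {Δt η θ : ℝ}
    {Ψ c₀ c μ : V → ℝ} (hE : ∀ K L, (K, L) ∈ E ↔ (L, K) ∈ E) (hτsym : ∀ K L, τ K L = τ L K)
    (hΔt : Δt ≠ 0) (hη : η ≠ 0) (hc : ∀ K, 0 < c K)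
    (heq : ∀ K, m K * (c K - c₀ K) / Δt
      + nbrSum E K (fun L => τ K L * (lm (c K) (c L) / η * (μ K + Ψ K - μ L - Ψ L)
          + θ * (c K - c L))) = 0) :
    ∑ K, m K * (c K - c₀ K) * (μ K + Ψ K + θ * η * log (c K))
      = -Δt * edgeSum E (fun K L => τ K L * (lm (c K) (c L) / η)
          * (μ K + Ψ K + θ * η * log (c K) - μ L - Ψ L - θ * η * log (c L)) ^ 2) := by
  set w : V → ℝ := fun K => μ K + Ψ K + θ * η * log (c K)
  set a : V → V → ℝ := fun K L => τ K L * (lm (c K) (c L) / η)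
  have ha : ∀ K L, a K L = a L K := fun K L => by simp only [a, hτsym K L, lm_symm (c K)]
  have hflux : ∀ K L, τ K L * (lm (c K) (c L) / η * (μ K + Ψ K - μ L - Ψ L) + θ * (c K - c L))
      = a K L * (w K - w L) := fun K L => by
    rw [← lm_mul_log_sub_log (hc K) (hc L)]
    simp only [a, w]
    field_simp
    ring
  have hcell : ∀ K, m K * (c K - c₀ K) * w K
      = -Δt * (w K * nbrSum E K (fun L => a K L * (w K - w L))) := fun K => by
    have h := heq K
    simp only [hflux] at h
    rw [add_eq_zero_iff_eq_neg, div_eq_iff hΔt] at h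
    rw [h]
    ring
  rw [sum_congr rfl fun K _ => hcell K, ← mul_sum, sum_mul_nbrSum_eq_edgeSum hE ha]
  congr 2
  funext K L
  ring

theorem discreteEnergy_add_mul_discreteDissipation_le {m : V → ℝ} {τ : V → V → ℝ}
    {Δt α κ η₁ η₂ θ₁ θ₂ : ℝ} {Ψ₁ Ψ₂ c₁₀ c₂₀ c₁ c₂ μ₁ μ₂ : V → ℝ}
    (hE : ∀ K L, (K, L) ∈ E ↔ (L, K) ∈ E) (hm : ∀ K, 0 < m K)
    (hτ : ∀ K L, (K, L) ∈ E → 0 ≤ τ K L) (hτsym : ∀ K L, τ K L = τ L K)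
    (hΔt : Δt ≠ 0) (hα : 0 ≤ α) (hκ : 0 ≤ κ) (hη₁ : 0 < η₁) (hη₂ : 0 < η₂)
    (hθ₁ : 0 ≤ θ₁) (hθ₂ : 0 ≤ θ₂) (hc₁₀ : ∀ K, 0 ≤ c₁₀ K) (hc₂₀ : ∀ K, 0 ≤ c₂₀ K)
    (hc₀sum : ∀ K, c₁₀ K + c₂₀ K = 1)
    (hsol : OneStepScheme E m τ Δt α κ η₁ η₂ θ₁ θ₂ Ψ₁ Ψ₂ c₁₀ c₂₀ c₁ c₂ μ₁ μ₂)
    (hc₁ : ∀ K, 0 < c₁ K) (hc₂ : ∀ K, 0 < c₂ K) :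
    discreteEnergy E m τ α κ η₁ η₂ θ₁ θ₂ Ψ₁ Ψ₂ c₁ c₂
        + Δt * discreteDissipation E τ η₁ η₂ θ₁ θ₂ Ψ₁ Ψ₂ c₁ c₂ μ₁ μ₂
      ≤ discreteEnergy E m τ α κ η₁ η₂ θ₁ θ₂ Ψ₁ Ψ₂ c₁₀ c₂₀ := by
  obtain ⟨heq₁, heq₂, hμ, hsum, -⟩ := hsol
  have hbal₁ := sum_increment_mul_potential_eq hE hτsym hΔt hη₁.ne' hc₁ heq₁
  have hbal₂ := sum_increment_mul_potential_eq hE hτsym hΔt hη₂.ne' hc₂ heq₂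
  have hgrad := mul_le_mul_of_nonneg_left (edgeSum_sq_sub_edgeSum_sq_le hE hτ hτsym c₁ c₁₀) hα
  have hcell : ∀ K, m K * (κ * c₁ K * c₂ K + (c₁ K * Ψ₁ K + θ₁ * η₁ * ent (c₁ K))
        + (c₂ K * Ψ₂ K + θ₂ * η₂ * ent (c₂ K)))
      ≤ m K * (κ * c₁₀ K * c₂₀ K + (c₁₀ K * Ψ₁ K + θ₁ * η₁ * ent (c₁₀ K))
          + (c₂₀ K * Ψ₂ K + θ₂ * η₂ * ent (c₂₀ K)))
        + m K * (c₁ K - c₁₀ K) * (μ₁ K + Ψ₁ K + θ₁ * η₁ * log (c₁ K))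
        + m K * (c₂ K - c₂₀ K) * (μ₂ K + Ψ₂ K + θ₂ * η₂ * log (c₂ K))
        - α * ((c₁ K - c₁₀ K) * nbrSum E K (fun L => τ K L * (c₁ K - c₁ L))) := fun K => by
    have hmK := (hm K).le
    have hκK := mul_le_mul_of_nonneg_left
      (mul_sub_mul_le_of_add_eq_one (hsum K) (hc₀sum K)) (mul_nonneg hmK hκ)
    have hent₁ := mul_le_mul_of_nonneg_left (ent_sub_ent_le (hc₁ K) (hc₁₀ K))
      (mul_nonneg (mul_nonneg hmK hθ₁) hη₁.le)
    have hent₂ := mul_le_mul_of_nonneg_left (ent_sub_ent_le (hc₂ K) (hc₂₀ K))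
      (mul_nonneg (mul_nonneg hmK hθ₂) hη₂.le)
    have hμK : m K * (μ₁ K - μ₂ K)
        = α * nbrSum E K (fun L => τ K L * (c₁ K - c₁ L)) + m K * κ * (1 - 2 * c₁₀ K) := by
      rw [hμ K]
      field_simp [(hm K).ne']
    linear_combination hκK + hent₁ + hent₂ - (c₁ K - c₁₀ K) * hμK
      - m K * μ₂ K * hsum K + m K * μ₂ K * hc₀sum K
  have hcells := sum_le_sum fun K (_ : K ∈ univ) => hcell K
  rw [sum_sub_distrib, sum_add_distrib, sum_add_distrib, ← mul_sum] at hcells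
  unfold discreteEnergy discreteDissipation
  linarith

end Graph

theorem LinfH1_estimate_one_step_general
    {V : Type*} [Fintype V] [DecidableEq V]
    (E : Finset (V × V)) (m : V → ℝ) (τ : V → V → ℝ)
    (Δt α κ η₁ η₂ θ₁ θ₂ : ℝ) (Ψ₁ Ψ₂ : V → ℝ)
    (c₁₀ c₂₀ c₁ c₂ μ₁ μ₂ : V → ℝ)
    (hEsym : ∀ K L : V, (K, L) ∈ E ↔ (L, K) ∈ E)
    (hm : ∀ K, 0 < m K)
    (hτpos : ∀ K L, (K, L) ∈ E → 0 < τ K L)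
    (hτsym : ∀ K L, τ K L = τ L K)
    (hΔt : 0 < Δt) (hα : 0 < α) (hκ : 0 < κ)
    (hη₁ : 0 < η₁) (hη₂ : 0 < η₂) (hθ₁ : 0 < θ₁) (hθ₂ : 0 < θ₂)
    (hc₁₀ : ∀ K, c₁₀ K ∈ Set.Icc (0:ℝ) 1)
    (hc₂₀ : ∀ K, c₂₀ K ∈ Set.Icc (0:ℝ) 1)
    (hc₀sum : ∀ K, c₁₀ K + c₂₀ K = 1)
    (hsol : OneStepScheme E m τ Δt α κ η₁ η₂ θ₁ θ₂ Ψ₁ Ψ₂ c₁₀ c₂₀ c₁ c₂ μ₁ μ₂)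
    (hpos : ∀ K : V, (0 < c₁ K ∧ c₁ K < 1) ∧ (0 < c₂ K ∧ c₂ K < 1)) :
    edgeSum E (fun K L => τ K L * (c₁ K - c₁ L) ^ 2)
      ≤ 2 / α * (discreteEnergy E m τ α κ η₁ η₂ θ₁ θ₂ Ψ₁ Ψ₂ c₁₀ c₂₀
          + ((∑ K : V, m K * |Ψ₁ K|) + ∑ K : V, m K * |Ψ₂ K|)) := by
  have hτ : ∀ K L, (K, L) ∈ E → 0 ≤ τ K L := fun K L h => (hτpos K L h).le
  have hdecay := discreteEnergy_add_mul_discreteDissipation_le hEsym hm hτ hτsym hΔt.ne'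
    hα.le hκ.le hη₁ hη₂ hθ₁.le hθ₂.le (fun K => (hc₁₀ K).1) (fun K => (hc₂₀ K).1) hc₀sum hsol
    (fun K => (hpos K).1.1) (fun K => (hpos K).2.1)
  have hdiss := mul_nonneg hΔt.le
    (discreteDissipation_nonneg hτ hη₁.le hη₂.le θ₁ θ₂ Ψ₁ Ψ₂ c₁ c₂ μ₁ μ₂)
  have hlower := half_mul_edgeSum_le_discreteEnergy_add (E := E) (fun K => (hm K).le) hκ.le hη₁.le
    hη₂.le hθ₁.le hθ₂.le (fun K => ⟨(hpos K).1.1.le, (hpos K).1.2.le⟩)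
    (fun K => ⟨(hpos K).2.1.le, (hpos K).2.2.le⟩) τ α Ψ₁ Ψ₂
  rw [div_mul_eq_mul_div, le_div_iff₀ hα]
  linarith

/-- Discrete L∞-H¹ estimate on the volume fractions. -/
theorem LinfH1_estimate_one_step
    {V : Type*} [Fintype V] [DecidableEq V] [Nonempty V]
    (E : Finset (V × V)) (m : V → ℝ) (τ : V → V → ℝ)
    (Δt α κ η₁ η₂ θ₁ θ₂ : ℝ) (Ψ₁ Ψ₂ : V → ℝ)
    (c₁₀ c₂₀ c₁ c₂ μ₁ μ₂ : V → ℝ)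
    (hEirr : ∀ K : V, (K, K) ∉ E)
    (hEsym : ∀ K L : V, (K, L) ∈ E ↔ (L, K) ∈ E)
    (hconn : (SimpleGraph.fromRel (fun K L : V => (K, L) ∈ E)).Connected)
    (hm : ∀ K, 0 < m K)
    (hτpos : ∀ K L, (K, L) ∈ E → 0 < τ K L)
    (hτsym : ∀ K L, τ K L = τ L K)
    (hΔt : 0 < Δt) (hα : 0 < α) (hκ : 0 < κ)
    (hη₁ : 0 < η₁) (hη₂ : 0 < η₂) (hθ₁ : 0 < θ₁) (hθ₂ : 0 < θ₂)
    (hc₁₀ : ∀ K, c₁₀ K ∈ Set.Icc (0:ℝ) 1)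
    (hc₂₀ : ∀ K, c₂₀ K ∈ Set.Icc (0:ℝ) 1)
    (hc₀sum : ∀ K, c₁₀ K + c₂₀ K = 1)
    (hsol : OneStepScheme E m τ Δt α κ η₁ η₂ θ₁ θ₂ Ψ₁ Ψ₂ c₁₀ c₂₀ c₁ c₂ μ₁ μ₂)
    (hpos : ∀ K : V, (0 < c₁ K ∧ c₁ K < 1) ∧ (0 < c₂ K ∧ c₂ K < 1)) :
    edgeSum E (fun K L => τ K L * (c₁ K - c₁ L) ^ 2)
      ≤ 2 / α * (discreteEnergy E m τ α κ η₁ η₂ θ₁ θ₂ Ψ₁ Ψ₂ c₁₀ c₂₀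
          + ((∑ K : V, m K * |Ψ₁ K|) + ∑ K : V, m K * |Ψ₂ K|)) :=
  LinfH1_estimate_one_step_general E m τ Δt α κ η₁ η₂ θ₁ θ₂ Ψ₁ Ψ₂ c₁₀ c₂₀ c₁ c₂ μ₁ μ₂ hEsym hm hτpos
    hτsym hΔt hα hκ hη₁ hη₂ hθ₁ hθ₂ hc₁₀ hc₂₀ hc₀sum hsol hpos
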